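/- Let E be a d-dimensional inner product space and n₁,...,n_k ∈ E (k ≥ d) such that any d of them are linearly independent. Let C(t) = ∩_{i=1}^k {x : ⟨x, n_i⟩ ≤ c_i(t)} be uniformly bounded with Lipschitz c_i, and suppose the active set J(t,x) = {i : ⟨x, n_i⟩ = c_i(t)} has cardinality ≤ d for all x ∈ C(t), t. Suppose x and y are two non-constant T-periodic solutions of -x' ∈ N_{C(t)}(x) with the same active sets J(t, x(t)) = J(t, y(t)) for all t and with ‖x(t) − y(t)‖ constant. Then x = y. -/

import Mathlib

open MeasureTheory InnerProductSpace

/-- The normal cone of convex analysis: empty outside `C`. -/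
def normalCone {E : Type*} [NormedAddCommGroup E] [InnerProductSpace ℝ E]
    (C : Set E) (x : E) : Set E :=
  {ζ | x ∈ C ∧ ∀ c ∈ C, ⟪ζ, c - x⟫_ℝ ≤ 0}

/-- A solution of the sweeping process `-x'(t) ∈ N_{C(t)}(x(t))`: a Lipschitz
function satisfying the differential inclusion a.e. -/
def IsSweepingSolution {E : Type*} [NormedAddCommGroup E] [InnerProductSpace ℝ E]
    (C : ℝ → Set E) (x : ℝ → E) : Prop :=
  (∃ K : NNReal, LipschitzWith K x) ∧ (∀ t, x t ∈ C t) ∧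
    ∀ᵐ t ∂(volume : Measure ℝ), ∃ v : E, HasDerivAt x v t ∧ -v ∈ normalCone (C t) (x t)

/-!
Two solutions with the same active sets have a.e. equal velocities. Indeed both velocities lie in
the span of the active normals, and `⟪n i, x - y⟫` vanishes at all times where `i` is active, so its
derivative vanishes at every accumulation point of those times, that is, at almost every one of
them. Hence `x - y` is constant.

If the normals that are ever active along `x` contain a basis, `x - y` is orthogonal to it, so
`x = y`. Otherwise they are part of a basis `n_s`. Each dual basis vector `ν` pairs nonnegatively
with the active normals, so `t ↦ ⟪ν, x t⟫` is antitone. It is also periodic, so it is constant,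
and then `x` is constant.
-/

open Set Filter Topology

theorem LipschitzWith.antitone_of_ae_deriv_nonpos {f : ℝ → ℝ} {K : NNReal}
    (hf : LipschitzWith K f) (hd : ∀ᵐ t, deriv f t ≤ 0) : Antitone f := by
  intro a b hab
  have hint : 0 ≤ ∫ t in a..b, -deriv f t :=
    intervalIntegral.integral_nonneg_of_ae hab (by filter_upwards [hd] with t ht; simpa using ht)
  rw [intervalIntegral.integral_neg,
    hf.lipschitzOnWith.absolutelyContinuousOnInterval.integral_deriv_eq_sub] at hint
  linarith

theorem LipschitzWith.eq_of_ae_hasDerivAt_zero {F : Type*} [NormedAddCommGroup F]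
    [NormedSpace ℝ F] {f : ℝ → F} {K : NNReal} (hf : LipschitzWith K f)
    (hd : ∀ᵐ t, HasDerivAt f 0 t) (a b : ℝ) : f a = f b := by
  obtain ⟨C, hC⟩ := hf.lipschitzOnWith.absolutelyContinuousOnInterval.const_of_ae_hasDerivAt_zero
    (a := a) (b := b) (hd.mono fun t ht _ => ht)
  rw [hC a left_mem_uIcc, hC b right_mem_uIcc]

theorem Antitone.eq_of_periodic {f : ℝ → ℝ} {T : ℝ} (hf : Antitone f) (hT : 0 < T)
    (hper : Function.Periodic f T) (a b : ℝ) : f a = f b := by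
  wlog hab : a ≤ b generalizing a b
  · exact (this b a (le_of_not_ge hab)).symm
  obtain ⟨m, hm⟩ := exists_nat_ge ((b - a) / T)
  have hbm : b ≤ a + m * T := by rw [div_le_iff₀ hT] at hm; linarith
  refine le_antisymm ?_ (hf hab)
  calc f a = f (a + m * T) := (hper.nat_mul m a).symm
    _ ≤ f b := hf hbm

theorem Real.ae_accPt_of_mem (s : Set ℝ) : ∀ᵐ t, t ∈ s → AccPt t (𝓟 s) := by
  have hcount : {t ∈ s | 𝓝[s ∩ Ioi t] t = ⊥}.Countable := countable_setOfPred_isolated_right_within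
  filter_upwards [hcount.ae_notMem volume] with t ht hts
  rw [accPt_principal_iff_nhdsWithin, neBot_iff]
  intro hbot
  exact ht ⟨hts, le_bot_iff.1 (hbot ▸ nhdsWithin_mono t fun u hu => ⟨hu.1, ne_of_gt hu.2⟩)⟩

theorem HasDerivAt.eq_zero_of_accPt {F : Type*} [NormedAddCommGroup F] [NormedSpace ℝ F]
    {f : ℝ → F} {v : F} {s : Set ℝ} {t : ℝ} (hf : HasDerivAt f v t) (hs : EqOn f 0 s)
    (ht : t ∈ s) (hacc : AccPt t (𝓟 s)) : v = 0 :=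
  (uniqueDiffWithinAt_iff_accPt.2 hacc).eq_deriv s hf.hasDerivWithinAt
    ((hasDerivWithinAt_const t s 0).congr hs (hs ht))

section Polyhedron

variable {E : Type*} [NormedAddCommGroup E] [InnerProductSpace ℝ E] {ι : Type*}

def polyhedron (n : ι → E) (b : ι → ℝ) : Set E := ⋂ i, {z | ⟪z, n i⟫_ℝ ≤ b i}

def activeSet (n : ι → E) (b : ι → ℝ) (z : E) : Set ι := {i | ⟪z, n i⟫_ℝ = b i}

variable {n : ι → E} {b : ι → ℝ} {z ζ : E}

theorem inner_sub_eq_zero_of_mem_activeSet {w : E} {i : ι} (hz : i ∈ activeSet n b z)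
    (hw : i ∈ activeSet n b w) : ⟪z - w, n i⟫_ℝ = 0 := by
  rw [inner_sub_left, sub_eq_zero]
  exact Eq.trans hz (Eq.symm hw)

variable [Finite ι]

theorem inner_nonpos_of_mem_normalCone_polyhedron {v : E}
    (hv : ∀ i ∈ activeSet n b z, ⟪v, n i⟫_ℝ ≤ 0) (hζ : ζ ∈ normalCone (polyhedron n b) z) :
    ⟪ζ, v⟫_ℝ ≤ 0 := by
  have hz : ∀ i, ⟪z, n i⟫_ℝ ≤ b i := mem_iInter.1 hζ.1
  have hmem : ∀ᶠ η in 𝓝[>] (0 : ℝ), z + η • v ∈ polyhedron n b := by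
    simp only [polyhedron, mem_iInter, mem_ofPred_eq, eventually_all]
    intro i
    by_cases hi : i ∈ activeSet n b z
    · filter_upwards [self_mem_nhdsWithin] with η (hη : 0 < η)
      rw [inner_add_left, real_inner_smul_left]
      nlinarith [hv i hi, hz i]
    · have hcont : Continuous fun η : ℝ => ⟪z + η • v, n i⟫_ℝ := by fun_prop
      have hlt : ⟪z + (0 : ℝ) • v, n i⟫_ℝ < b i := by simpa using lt_of_le_of_ne (hz i) hi
      exact ((hcont.continuousAt.eventually_lt continuousAt_const hlt).filter_mono
        nhdsWithin_le_nhds).mono fun _ => le_of_lt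
  obtain ⟨η, hηmem, hη⟩ := (hmem.and self_mem_nhdsWithin).exists
  have := hζ.2 _ hηmem
  rw [add_sub_cancel_left, real_inner_smul_right] at this
  exact nonpos_of_mul_nonpos_right this hη

theorem mem_span_of_mem_normalCone_polyhedron [FiniteDimensional ℝ E]
    (hζ : ζ ∈ normalCone (polyhedron n b) z) :
    ζ ∈ Submodule.span ℝ (n '' activeSet n b z) := by
  rw [← Submodule.orthogonal_orthogonal (Submodule.span ℝ _), Submodule.mem_orthogonal']
  intro q hq
  have hqn : ∀ i ∈ activeSet n b z, ⟪q, n i⟫_ℝ = 0 := fun i hi =>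
    (Submodule.mem_orthogonal' _ q).1 hq _ (Submodule.subset_span (mem_image_of_mem n hi))
  have h1 := inner_nonpos_of_mem_normalCone_polyhedron (fun i hi => (hqn i hi).le) hζ
  have h2 := inner_nonpos_of_mem_normalCone_polyhedron (v := -q)
    (fun i hi => by rw [inner_neg_left, hqn i hi, neg_zero]) hζ
  rw [inner_neg_right] at h2
  linarith

end Polyhedron

theorem HasDerivAt.const_inner {E : Type*} [NormedAddCommGroup E] [InnerProductSpace ℝ E]
    {f : ℝ → E} {v : E} {t : ℝ} (hf : HasDerivAt f v t) (ν : E) :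
    HasDerivAt (fun u => ⟪ν, f u⟫_ℝ) ⟪ν, v⟫_ℝ t :=
  (innerSL ℝ ν).hasFDerivAt.comp_hasDerivAt t hf

section Sweeping

variable {E : Type*} [NormedAddCommGroup E] [InnerProductSpace ℝ E] {ι : Type*}
  {n : ι → E} {c : ι → ℝ → ℝ} {x y : ℝ → E}

theorem eq_of_sub_eq_of_activeSet_basis {κ : Type*}
    (bs : Module.Basis κ ℝ E) (hsub : ∀ a b, x a - y a = x b - y b)
    (hact : ∀ j, ∃ t i, n i = bs j ∧ i ∈ activeSet n (c · t) (x t) ∧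
      i ∈ activeSet n (c · t) (y t)) : x = y := by
  have h0 : x 0 = y 0 := by
    refine ext_inner_left_basis bs fun j => ?_
    obtain ⟨t, i, hij, hxt, hyt⟩ := hact j
    rw [← sub_eq_zero, ← inner_sub_right, hsub 0 t, ← hij, real_inner_comm]
    exact inner_sub_eq_zero_of_mem_activeSet hxt hyt
  funext t
  exact sub_eq_zero.1 (by simpa [h0] using hsub t 0)

variable [Finite ι]

theorem IsSweepingSolution.antitone_inner
    (hx : IsSweepingSolution (fun t => polyhedron n (c · t)) x) {ν : E}
    (hν : ∀ t, ∀ i ∈ activeSet n (c · t) (x t), 0 ≤ ⟪ν, n i⟫_ℝ) :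
    Antitone fun t => ⟪ν, x t⟫_ℝ := by
  obtain ⟨K, hK⟩ := hx.1
  have hL : LipschitzWith _ fun t => ⟪ν, x t⟫_ℝ := (innerSL ℝ ν).lipschitz.comp hK
  refine hL.antitone_of_ae_deriv_nonpos ?_
  filter_upwards [hx.2.2] with t ⟨v, hv, hnc⟩
  rw [(hv.const_inner ν).deriv]
  have := inner_nonpos_of_mem_normalCone_polyhedron (v := -ν)
    (fun i hi => by rw [inner_neg_left, neg_nonpos]; exact hν t i hi) hnc
  rwa [inner_neg_neg, real_inner_comm] at this

theorem IsSweepingSolution.eq_of_periodic [FiniteDimensional ℝ E] {T : ℝ}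
    (hx : IsSweepingSolution (fun t => polyhedron n (c · t)) x)
    (hT : 0 < T) (hper : Function.Periodic x T) {κ : Type*} (bs : Module.Basis κ ℝ E)
    (hact : ∀ t, ∀ i ∈ activeSet n (c · t) (x t), n i ∈ range bs) (a b : ℝ) : x a = x b := by
  rw [bs.ext_elem_iff]
  intro j
  let ν := (toDual ℝ E).symm (bs.coord j).toContinuousLinearMap
  have hν : ∀ e, ⟪ν, e⟫_ℝ = bs.repr e j := fun e => by simp [ν, toDual_symm_apply]
  have hmono : Antitone fun t => ⟪ν, x t⟫_ℝ := hx.antitone_inner fun t i hi => by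
    obtain ⟨j', hj'⟩ := hact t i hi
    rw [← hj', hν, bs.repr_self]
    exact Finsupp.single_nonneg.2 zero_le_one j
  simpa only [hν] using hmono.eq_of_periodic hT (fun t => by simp only [hper t]) a b

theorem IsSweepingSolution.sub_eq_of_activeSet_eq [FiniteDimensional ℝ E]
    (hx : IsSweepingSolution (fun t => polyhedron n (c · t)) x)
    (hy : IsSweepingSolution (fun t => polyhedron n (c · t)) y)
    (hJ : ∀ t, activeSet n (c · t) (x t) = activeSet n (c · t) (y t)) (a b : ℝ) :
    x a - y a = x b - y b := by
  obtain ⟨Kx, hKx⟩ := hx.1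
  obtain ⟨Ky, hKy⟩ := hy.1
  refine (hKx.sub hKy).eq_of_ae_hasDerivAt_zero ?_ a b
  filter_upwards [hx.2.2, hy.2.2,
    ae_all_iff.2 fun i => Real.ae_accPt_of_mem {u | i ∈ activeSet n (c · u) (x u)}]
    with t ⟨vx, hvx, hnx⟩ ⟨vy, hvy, hny⟩ hacc
  suffices hv : vx - vy = 0 from hv ▸ hvx.sub hvy
  let K := Submodule.span ℝ (n '' activeSet n (c · t) (x t))
  have hK : vx - vy ∈ K := by
    have hx' := K.neg_mem (mem_span_of_mem_normalCone_polyhedron hnx)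
    have hy' := mem_span_of_mem_normalCone_polyhedron hny
    rw [← hJ t] at hy'
    rw [neg_neg] at hx'
    simpa using K.sub_mem hx' (K.neg_mem hy')
  have hperp : K ≤ (ℝ ∙ (vx - vy))ᗮ := by
    refine Submodule.span_le.2 ?_
    rintro _ ⟨i, hi, rfl⟩
    refine (Submodule.mem_orthogonal_singleton_iff_inner_right).2 ?_
    rw [real_inner_comm]
    refine ((hvx.sub hvy).const_inner (n i)).eq_zero_of_accPt (fun u hu => ?_) hi (hacc i hi)
    replace hu : i ∈ activeSet n (c · u) (x u) := hu
    change ⟪n i, x u - y u⟫_ℝ = 0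
    rw [real_inner_comm]
    exact inner_sub_eq_zero_of_mem_activeSet hu (hJ u ▸ hu)
  exact inner_self_eq_zero.1 (Submodule.mem_orthogonal_singleton_iff_inner_right.1 (hperp hK))

end Sweeping

theorem stmt_16_general {E : Type*} [NormedAddCommGroup E] [InnerProductSpace ℝ E]
    [FiniteDimensional ℝ E]
    (T : ℝ) (hT : 0 < T) {k : ℕ} (hk : Module.finrank ℝ E ≤ k)
    (n : Fin k → E) (c : Fin k → ℝ → ℝ)
    (hind : ∀ s : Finset (Fin k), s.card = Module.finrank ℝ E →
      LinearIndependent ℝ (fun i : s => n i))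
    (C : ℝ → Set E) (hC : ∀ t, C t = ⋂ i, {z : E | ⟪z, n i⟫_ℝ ≤ c i t})
    (x y : ℝ → E) (hx : IsSweepingSolution C x) (hy : IsSweepingSolution C y)
    (hxT : ∀ t, x (t + T) = x t)
    (hxnc : ∃ s t : ℝ, x s ≠ x t)
    (hJ : ∀ t : ℝ, {i : Fin k | ⟪x t, n i⟫_ℝ = c i t} = {i : Fin k | ⟪y t, n i⟫_ℝ = c i t}) :
    x = y := by
  classical
  obtain rfl : C = fun t => polyhedron n (c · t) := funext hC
  replace hJ : ∀ t, activeSet n (c · t) (x t) = activeSet n (c · t) (y t) := hJ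
  have hsub := hx.sub_eq_of_activeSet_eq hy hJ
  let basisOf (s : Finset (Fin k)) (hs : s.card = Module.finrank ℝ E) : Module.Basis s ℝ E :=
    basisOfLinearIndependentOfCardEqFinrank' _ (hind s hs) (by simpa using hs)
  let J : Finset (Fin k) := {i | ∃ t, i ∈ activeSet n (c · t) (x t)}
  have hJmem : ∀ {i}, i ∈ J ↔ ∃ t, i ∈ activeSet n (c · t) (x t) := by simp [J]
  rcases lt_or_ge J.card (Module.finrank ℝ E) with hJlt | hJge
  · obtain ⟨s, hJs, hs⟩ := Finset.exists_superset_card_eq hJlt.le (by simpa using hk)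
    obtain ⟨a, b, hab⟩ := hxnc
    refine absurd (hx.eq_of_periodic hT hxT (basisOf s hs) (fun t i hi => ?_) a b) hab
    exact ⟨⟨i, hJs (hJmem.2 ⟨t, hi⟩)⟩, by simp [basisOf]⟩
  · obtain ⟨s, hsJ, hs⟩ := Finset.exists_subset_card_eq hJge
    refine eq_of_sub_eq_of_activeSet_basis (n := n) (c := c) (basisOf s hs) hsub fun j => ?_
    obtain ⟨t, hxt⟩ := hJmem.1 (hsJ j.2)
    exact ⟨t, j, by simp [basisOf], hxt, hJ t ▸ hxt⟩

theorem stmt_16 {E : Type*} [NormedAddCommGroup E] [InnerProductSpace ℝ E]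
    [FiniteDimensional ℝ E]
    (T : ℝ) (hT : 0 < T) {k : ℕ} (hk : Module.finrank ℝ E ≤ k)
    (n : Fin k → E) (c : Fin k → ℝ → ℝ)
    (Lc : Fin k → NNReal) (hc : ∀ i, LipschitzWith (Lc i) (c i))
    (hind : ∀ s : Finset (Fin k), s.card = Module.finrank ℝ E →
      LinearIndependent ℝ (fun i : s => n i))
    (C : ℝ → Set E) (hC : ∀ t, C t = ⋂ i, {z : E | ⟪z, n i⟫_ℝ ≤ c i t})
    (M : ℝ) (hbdd : ∀ t, C t ⊆ Metric.closedBall 0 M)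
    (hcard : ∀ t : ℝ, ∀ z ∈ C t,
      Set.ncard {i : Fin k | ⟪z, n i⟫_ℝ = c i t} ≤ Module.finrank ℝ E)
    (x y : ℝ → E) (hx : IsSweepingSolution C x) (hy : IsSweepingSolution C y)
    (hxT : ∀ t, x (t + T) = x t) (hyT : ∀ t, y (t + T) = y t)
    (hxnc : ∃ s t : ℝ, x s ≠ x t) (hync : ∃ s t : ℝ, y s ≠ y t)
    (hJ : ∀ t : ℝ, {i : Fin k | ⟪x t, n i⟫_ℝ = c i t} = {i : Fin k | ⟪y t, n i⟫_ℝ = c i t})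
    (hconst : ∀ s t : ℝ, ‖x s - y s‖ = ‖x t - y t‖) :
    x = y :=
  stmt_16_general T hT hk n c hind C hC x y hx hy hxT hxnc hJ
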